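/- Let K be a closed cone with nonempty interior in a finite dimensional real normed space. If 𝒜 is a bounded, primitive family of continuous, order-preserving, homogeneous maps on K, then the Berger–Wang formula holds: r(𝒜) = r̂(𝒜). -/

import Mathlib

open Filter Topology Set

noncomputable section

/-- A wedge in a real normed space: a convex set closed under positive scalar multiplication. -/
def IsWedge {X : Type*} [NormedAddCommGroup X] [NormedSpace ℝ X] (W : Set X) : Prop :=
  Convex ℝ W ∧ ∀ c : ℝ, 0 < c → ∀ x ∈ W, c • x ∈ W

/-- A closed cone: closed, convex, closed under positive scalar multiplication, K ∩ (−K) = {0}. -/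
def IsClosedCone {X : Type*} [NormedAddCommGroup X] [NormedSpace ℝ X] (K : Set X) : Prop :=
  IsClosed K ∧ Convex ℝ K ∧ (∀ c : ℝ, 0 < c → ∀ x ∈ K, c • x ∈ K) ∧ K ∩ (-K) = {0}

/-- A polyhedral cone: intersection of finitely many closed halfspaces through the origin. -/
def IsPolyhedralCone {X : Type*} [NormedAddCommGroup X] [NormedSpace ℝ X] (K : Set X) : Prop :=
  ∃ (k : ℕ) (φ : Fin k → (X →ₗ[ℝ] ℝ)), K = {x | ∀ i, 0 ≤ φ i x}

/-- `f` maps `W` into itself and is positively homogeneous on `W`. -/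
def HomogOn {X : Type*} [NormedAddCommGroup X] [NormedSpace ℝ X] (f : X → X) (W : Set X) : Prop :=
  Set.MapsTo f W W ∧ ∀ c : ℝ, 0 < c → ∀ x ∈ W, f (c • x) = c • f x

/-- `f` is order-preserving with respect to the order induced by the cone `K`. -/
def OrderPresOn {X : Type*} [NormedAddCommGroup X] [NormedSpace ℝ X] (f : X → X) (K : Set X) : Prop :=
  ∀ x ∈ K, ∀ y ∈ K, y - x ∈ K → f y - f x ∈ K

/-- `f` is subadditive on `K`: f(x+y) ≤ f(x)+f(y) in the cone order. -/
def SubaddOn {X : Type*} [NormedAddCommGroup X] [NormedSpace ℝ X] (f : X → X) (K : Set X) : Prop :=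
  ∀ x ∈ K, ∀ y ∈ K, (f x + f y) - f (x + y) ∈ K

/-- The norm of a homogeneous map on `W`: sup of ‖f x‖ over unit vectors of `W`. -/
def opNormW {X : Type*} [NormedAddCommGroup X] (f : X → X) (W : Set X) : ℝ :=
  sSup ((fun x => ‖f x‖) '' {x ∈ W | ‖x‖ = 1})

/-- A bounded homogeneous map on `W`. -/
def BoundedMapOn {X : Type*} [NormedAddCommGroup X] (f : X → X) (W : Set X) : Prop :=
  ∃ C : ℝ, ∀ x ∈ W, ‖f x‖ ≤ C * ‖x‖

/-- A bounded family of homogeneous maps on `W`. -/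
def BoundedFamOn {X : Type*} [NormedAddCommGroup X] (A : Set (X → X)) (W : Set X) : Prop :=
  ∃ C : ℝ, ∀ f ∈ A, ∀ x ∈ W, ‖f x‖ ≤ C * ‖x‖

/-- `famPow A m` = 𝒜^m, the set of m-fold compositions of maps from `A` (with 𝒜^0 = {id}). -/
def famPow {X : Type*} (A : Set (X → X)) : ℕ → Set (X → X)
  | 0 => {id}
  | m + 1 => {h | ∃ f ∈ A, ∃ g ∈ famPow A m, h = f ∘ g}

/-- The composition of two families of maps. -/
def compFam {X : Type*} (A B : Set (X → X)) : Set (X → X) :=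
  {h | ∃ f ∈ A, ∃ g ∈ B, h = f ∘ g}

/-- The Bonsall cone spectral radius r(f) = inf_{n>0} ‖f^n‖^{1/n}. -/
def coneSpecRad {X : Type*} [NormedAddCommGroup X] (f : X → X) (W : Set X) : ℝ :=
  ⨅ n : ℕ+, (opNormW (f^[(n : ℕ)]) W) ^ (((n : ℕ) : ℝ)⁻¹)

/-- sup_{f ∈ 𝒜^m} ‖f‖^{1/m}. -/
def jointTerm {X : Type*} [NormedAddCommGroup X] (A : Set (X → X)) (W : Set X) (m : ℕ) : ℝ :=
  sSup ((fun f => (opNormW f W) ^ ((m : ℝ)⁻¹)) '' famPow A m)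

/-- sup_{f ∈ 𝒜^m} r(f)^{1/m}. -/
def genTerm {X : Type*} [NormedAddCommGroup X] (A : Set (X → X)) (W : Set X) (m : ℕ) : ℝ :=
  sSup ((fun f => (coneSpecRad f W) ^ ((m : ℝ)⁻¹)) '' famPow A m)

/-- The joint spectral radius r̂(𝒜) = inf_{m>0} sup_{f ∈ 𝒜^m} ‖f‖^{1/m}. -/
def jointRad {X : Type*} [NormedAddCommGroup X] (A : Set (X → X)) (W : Set X) : ℝ :=
  ⨅ m : ℕ+, jointTerm A W (m : ℕ)

/-- The generalized spectral radius r(𝒜) = sup_{m>0} sup_{f ∈ 𝒜^m} r(f)^{1/m}. -/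
def genRad {X : Type*} [NormedAddCommGroup X] (A : Set (X → X)) (W : Set X) : ℝ :=
  ⨆ m : ℕ+, genTerm A W (m : ℕ)

/-- β_m = inf_{f ∈ 𝒜^m} ‖f‖. -/
def subBeta {X : Type*} [NormedAddCommGroup X] (A : Set (X → X)) (W : Set X) (m : ℕ) : ℝ :=
  sInf ((fun f => opNormW f W) '' famPow A m)

/-- γ_m = inf_{f ∈ 𝒜^m} r(f). -/
def subGamma {X : Type*} [NormedAddCommGroup X] (A : Set (X → X)) (W : Set X) (m : ℕ) : ℝ :=
  sInf ((fun f => coneSpecRad f W) '' famPow A m)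

/-- F_m^d = f_m ∘ ⋯ ∘ f_1 for a sequence d of maps. -/
def seqComp {X : Type*} (d : ℕ → X → X) : ℕ → X → X
  | 0 => id
  | m + 1 => d m ∘ seqComp d m

/-- The standard cone ℝⁿ_{≥0}. -/
def stdCone (n : ℕ) : Set (Fin n → ℝ) := {x | ∀ i, 0 ≤ x i}

/-- The closed face F_J of the standard cone. -/
def stdFace {n : ℕ} (J : Set (Fin n)) : Set (Fin n → ℝ) :=
  {x | (∀ i, 0 ≤ x i) ∧ ∀ i ∉ J, x i = 0}

/-- A family of maps on ℝⁿ_{≥0} is irreducible if no non-trivial closed face is invariant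
under every member of the family. -/
def IrreducibleFam {n : ℕ} (A : Set ((Fin n → ℝ) → Fin n → ℝ)) : Prop :=
  ¬ ∃ J : Set (Fin n), J.Nonempty ∧ J ≠ Set.univ ∧ ∀ f ∈ A, Set.MapsTo f (stdFace J) (stdFace J)


/-!
The inequality `r(𝒜) ≤ r̂(𝒜)` holds for any bounded family: `r(f) ≤ ‖f^t‖^{1/t}`, and for
`f ∈ 𝒜^m` the iterate `f^t` is a product of `m` blocks from `𝒜^t`.

For the converse fix `u` in the interior of `K`. Compactness of the unit sphere of `K` makes
primitivity uniform: there are `M₀` and `δ > 0` such that each unit vector `x ∈ K` is mapped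
above `δ u` by some `g ∈ 𝒜^m` with `m ≤ M₀`. For `f ∈ 𝒜^n`, taking `x = f u / ‖f u‖` gives
`(g ∘ f) u ≥ ‖f u‖ δ u`, so the Collatz–Wielandt bound yields
`‖f u‖ ≲ r(g ∘ f) ≤ r(𝒜)^(m+n) ≤ max(r(𝒜), 1)^M₀ r(𝒜)^n`. As `K` is normal and `u` is an
order unit, `‖f‖ ≲ ‖f u‖`; hence `‖f‖ ≤ D r(𝒜)^n` with `D` independent of `n`, and taking
`n`-th roots gives `r̂(𝒜) ≤ r(𝒜)`.
-/

namespace IsClosedCone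

variable {X : Type*} [NormedAddCommGroup X] [NormedSpace ℝ X] {K : Set X}

theorem zero_mem (hK : IsClosedCone K) : (0 : X) ∈ K :=
  (hK.2.2.2.symm ▸ rfl : (0 : X) ∈ K ∩ -K).1

theorem smul_mem (hK : IsClosedCone K) {c : ℝ} (hc : 0 ≤ c) {x : X} (hx : x ∈ K) :
    c • x ∈ K := by
  rcases hc.eq_or_lt with rfl | hc
  · rw [zero_smul]
    exact hK.zero_mem
  · exact hK.2.2.1 c hc x hx

theorem add_mem (hK : IsClosedCone K) {x y : X} (hx : x ∈ K) (hy : y ∈ K) : x + y ∈ K := by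
  have hmid := hK.2.1 hx hy (by norm_num : (0 : ℝ) ≤ 1 / 2) (by norm_num : (0 : ℝ) ≤ 1 / 2)
    (by norm_num)
  convert hK.smul_mem zero_le_two hmid using 1
  rw [smul_add, smul_smul, smul_smul]
  norm_num

theorem sub_smul_mem_of_le (hK : IsClosedCone K) {u x : X} (hu : u ∈ K) {δ δ' : ℝ}
    (h : x - δ • u ∈ K) (hδ : δ' ≤ δ) : x - δ' • u ∈ K := by
  convert hK.add_mem h (hK.smul_mem (sub_nonneg.2 hδ) hu) using 1
  rw [sub_smul]
  abel

/-- In finite dimension a closed cone is normal. -/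
theorem exists_norm_le_mul_norm [FiniteDimensional ℝ X] (hK : IsClosedCone K) :
    ∃ N : ℝ, 1 ≤ N ∧ ∀ y z : X, y ∈ K → z - y ∈ K → ‖y‖ ≤ N * ‖z‖ := by
  set S := K ∩ Metric.sphere (0 : X) 1
  have hS : IsCompact S := (isCompact_sphere 0 1).inter_left hK.1
  have hpos : ∀ y ∈ S, 0 < Metric.infDist (-y) K := by
    rintro y ⟨hyK, hy1⟩
    refine (hK.1.notMem_iff_infDist_pos ⟨0, hK.zero_mem⟩).1 fun hneg => ?_
    have hy : y ∈ K ∩ -K := ⟨hyK, Set.mem_neg.2 hneg⟩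
    rw [hK.2.2.2, Set.mem_singleton_iff] at hy
    simp [hy] at hy1
  obtain ⟨η, hη, hηS⟩ := hS.exists_forall_le'
    ((Metric.continuous_infDist_pt K).comp continuous_neg).continuousOn hpos
  refine ⟨max η⁻¹ 1, le_max_right _ _, fun y z hy hzy => ?_⟩
  rcases eq_or_ne y 0 with rfl | hy0
  · rw [norm_zero]
    positivity
  have hny : 0 < ‖y‖ := norm_pos_iff.2 hy0
  -- `z / ‖y‖` is the sum of the unit vector `y / ‖y‖ ∈ S` and a point of `K`.
  have hη_le : η ≤ ‖y‖⁻¹ * ‖z‖ :=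
    calc η ≤ Metric.infDist (-(‖y‖⁻¹ • y)) K :=
          hηS _ ⟨hK.smul_mem (by positivity) hy, by simp [norm_smul, hny.ne']⟩
      _ ≤ dist (-(‖y‖⁻¹ • y)) (‖y‖⁻¹ • (z - y)) :=
          Metric.infDist_le_dist_of_mem (hK.smul_mem (by positivity) hzy)
      _ = ‖y‖⁻¹ * ‖z‖ := by
          rw [dist_eq_norm, smul_sub, ← neg_add', add_sub_cancel, norm_neg, norm_smul, norm_inv,
            norm_norm]
  calc ‖y‖ ≤ η⁻¹ * ‖z‖ := by
        rw [le_inv_mul_iff₀ hη]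
        rwa [le_inv_mul_iff₀ hny, mul_comm] at hη_le
    _ ≤ max η⁻¹ 1 * ‖z‖ := by gcongr; exact le_max_left _ _

theorem exists_smul_sub_mem_of_mem_interior (hK : IsClosedCone K) {u : X}
    (hu : u ∈ interior K) : ∃ M : ℝ, 0 < M ∧ ∀ x : X, (M * ‖x‖) • u - x ∈ K := by
  obtain ⟨ρ, hρ, hball⟩ := Metric.mem_nhds_iff.1 (mem_interior_iff_mem_nhds.1 hu)
  refine ⟨2 / ρ, by positivity, fun x => ?_⟩
  rcases eq_or_ne x 0 with rfl | hx0
  · simpa using hK.zero_mem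
  have hnx : 0 < ‖x‖ := norm_pos_iff.2 hx0
  have hv : u - (ρ / (2 * ‖x‖)) • x ∈ K := by
    apply hball
    rw [Metric.mem_ball, dist_eq_norm, sub_sub_cancel_left, norm_neg, norm_smul,
      Real.norm_of_nonneg (by positivity), div_mul_eq_mul_div, mul_div_mul_right _ _ hnx.ne']
    linarith
  convert hK.smul_mem (by positivity : 0 ≤ 2 / ρ * ‖x‖) hv using 1
  rw [smul_sub, smul_smul]
  field_simp
  simp

end IsClosedCone

section Maps

variable {X : Type*} [NormedAddCommGroup X] {K : Set X} {f g : X → X}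

theorem BoundedMapOn.comp (hf : BoundedMapOn f K) (hg : BoundedMapOn g K) (hgK : MapsTo g K K) :
    BoundedMapOn (f ∘ g) K := by
  obtain ⟨C, hC⟩ := hf
  obtain ⟨D, hD⟩ := hg
  refine ⟨max C 0 * D, fun x hx => ?_⟩
  calc ‖f (g x)‖ ≤ max C 0 * ‖g x‖ :=
        (hC _ (hgK hx)).trans (by gcongr; exact le_max_left _ _)
    _ ≤ max C 0 * (D * ‖x‖) := mul_le_mul_of_nonneg_left (hD x hx) (le_max_right C 0)
    _ = max C 0 * D * ‖x‖ := (mul_assoc _ _ _).symm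

theorem BoundedMapOn.iterate (hf : BoundedMapOn f K) (hfK : MapsTo f K K) :
    ∀ k : ℕ, BoundedMapOn f^[k] K
  | 0 => ⟨1, fun x _ => by simp⟩
  | k + 1 => by
    rw [Function.iterate_succ']
    exact hf.comp (hf.iterate hfK k) (hfK.iterate k)

variable [NormedSpace ℝ X]

theorem HomogOn.map_zero (hK : IsClosedCone K) (hf : HomogOn f K) : f 0 = 0 := by
  have h := hf.2 2 two_pos 0 hK.zero_mem
  rw [smul_zero, two_smul] at h
  exact left_eq_add.1 h

theorem HomogOn.comp (hf : HomogOn f K) (hg : HomogOn g K) : HomogOn (f ∘ g) K :=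
  ⟨hf.1.comp hg.1, fun c hc x hx => by
    rw [Function.comp_apply, hg.2 c hc x hx, hf.2 c hc _ (hg.1 hx), Function.comp_apply]⟩

theorem HomogOn.iterate (hf : HomogOn f K) : ∀ k : ℕ, HomogOn f^[k] K
  | 0 => ⟨mapsTo_id K, fun _ _ _ _ => rfl⟩
  | k + 1 => by
    rw [Function.iterate_succ']
    exact hf.comp (hf.iterate k)

theorem OrderPresOn.comp (hf : OrderPresOn f K) (hg : OrderPresOn g K) (hgK : MapsTo g K K) :
    OrderPresOn (f ∘ g) K :=
  fun x hx y hy hxy => hf _ (hgK hx) _ (hgK hy) (hg x hx y hy hxy)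

end Maps

section FamPow

variable {X : Type*} {A : Set (X → X)}

theorem famPow_induction {P : ℕ → (X → X) → Prop} (zero : P 0 id)
    (succ : ∀ m, ∀ f ∈ A, ∀ g ∈ famPow A m, P m g → P (m + 1) (f ∘ g)) :
    ∀ m, ∀ f ∈ famPow A m, P m f
  | 0, _, rfl => zero
  | m + 1, _, ⟨f, hf, g, hg, rfl⟩ => succ m f hf g hg (famPow_induction zero succ m g hg)

theorem famPow_add (a b : ℕ) : famPow A (a + b) = compFam (famPow A a) (famPow A b) := by
  induction a with
  | zero =>
    ext h
    simp [famPow, compFam]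
  | succ a ih =>
    ext h
    rw [Nat.add_right_comm]
    change h ∈ compFam A (famPow A (a + b)) ↔ _
    rw [ih]
    constructor
    · rintro ⟨f, hf, _, ⟨p, hp, q, hq, rfl⟩, rfl⟩
      exact ⟨f ∘ p, ⟨f, hf, p, hp, rfl⟩, q, hq, rfl⟩
    · rintro ⟨_, ⟨f, hf, p, hp, rfl⟩, q, hq, rfl⟩
      exact ⟨f, hf, p ∘ q, ⟨p, hp, q, hq, rfl⟩, rfl⟩

theorem comp_mem_famPow_add {a b : ℕ} {f g : X → X} (hf : f ∈ famPow A a)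
    (hg : g ∈ famPow A b) : f ∘ g ∈ famPow A (a + b) := by
  rw [famPow_add]
  exact ⟨f, hf, g, hg, rfl⟩

theorem iterate_mem_famPow {m : ℕ} {f : X → X} (hf : f ∈ famPow A m) :
    ∀ k : ℕ, f^[k] ∈ famPow A (m * k)
  | 0 => rfl
  | k + 1 => by
    rw [Function.iterate_succ', Nat.mul_succ, add_comm]
    exact comp_mem_famPow_add hf (iterate_mem_famPow hf k)

variable {K : Set X} {m : ℕ} {f : X → X}

theorem mapsTo_of_mem_famPow (hA : ∀ f ∈ A, MapsTo f K K) (hf : f ∈ famPow A m) :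
    MapsTo f K K :=
  famPow_induction (P := fun _ f => MapsTo f K K) (mapsTo_id K)
    (fun _ f hf _ _ hg => (hA f hf).comp hg) m f hf

theorem continuousOn_of_mem_famPow [TopologicalSpace X] (hmaps : ∀ f ∈ A, MapsTo f K K)
    (hcont : ∀ f ∈ A, ContinuousOn f K) (hf : f ∈ famPow A m) : ContinuousOn f K :=
  famPow_induction (P := fun _ f => ContinuousOn f K) continuousOn_id
    (fun _ f hf _ hgm hg => (hcont f hf).comp hg (mapsTo_of_mem_famPow hmaps hgm)) m f hf

variable [NormedAddCommGroup X]

theorem norm_apply_le_pow_mul_of_mem_famPow (hmaps : ∀ f ∈ A, MapsTo f K K) {C : ℝ}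
    (hC : 0 ≤ C) (hb : ∀ f ∈ A, ∀ x ∈ K, ‖f x‖ ≤ C * ‖x‖) (hf : f ∈ famPow A m) :
    ∀ x ∈ K, ‖f x‖ ≤ C ^ m * ‖x‖ := by
  refine famPow_induction (P := fun m f => ∀ x ∈ K, ‖f x‖ ≤ C ^ m * ‖x‖) (fun x _ => by simp)
    (fun m f hf g hgm hg x hx => ?_) m f hf
  calc ‖f (g x)‖ ≤ C * ‖g x‖ := hb f hf _ (mapsTo_of_mem_famPow hmaps hgm hx)
    _ ≤ C * (C ^ m * ‖x‖) := by gcongr; exact hg x hx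
    _ = C ^ (m + 1) * ‖x‖ := by ring

variable [NormedSpace ℝ X]

theorem homogOn_of_mem_famPow (hA : ∀ f ∈ A, HomogOn f K) (hf : f ∈ famPow A m) :
    HomogOn f K :=
  famPow_induction (P := fun _ f => HomogOn f K) ⟨mapsTo_id K, fun _ _ _ _ => rfl⟩
    (fun _ f hf _ _ hg => (hA f hf).comp hg) m f hf

theorem orderPresOn_of_mem_famPow (hmaps : ∀ f ∈ A, MapsTo f K K)
    (hord : ∀ f ∈ A, OrderPresOn f K) (hf : f ∈ famPow A m) : OrderPresOn f K :=
  famPow_induction (P := fun _ f => OrderPresOn f K) (fun _ _ _ _ h => h)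
    (fun _ f hf _ hgm hg => (hord f hf).comp hg (mapsTo_of_mem_famPow hmaps hgm)) m f hf

end FamPow

section OpNorm

variable {X : Type*} [NormedAddCommGroup X] {W : Set X} {f g : X → X}

theorem opNormW_nonneg (f : X → X) (W : Set X) : 0 ≤ opNormW f W :=
  Real.sSup_nonneg (by rintro _ ⟨x, _, rfl⟩; exact norm_nonneg _)

theorem opNormW_le {B : ℝ} (hB : 0 ≤ B) (h : ∀ x ∈ W, ‖x‖ = 1 → ‖f x‖ ≤ B) :
    opNormW f W ≤ B :=
  Real.sSup_le (by rintro _ ⟨x, ⟨hxW, hx1⟩, rfl⟩; exact h x hxW hx1) hB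

theorem opNormW_le_of_norm_apply_le {B : ℝ} (hB : 0 ≤ B) (h : ∀ x ∈ W, ‖f x‖ ≤ B * ‖x‖) :
    opNormW f W ≤ B :=
  opNormW_le hB fun x hx hx1 => by simpa [hx1] using h x hx

theorem norm_apply_le_opNormW (hf : BoundedMapOn f W) {x : X} (hx : x ∈ W) (hx1 : ‖x‖ = 1) :
    ‖f x‖ ≤ opNormW f W := by
  obtain ⟨C, hC⟩ := hf
  refine le_csSup ⟨C, ?_⟩ ⟨x, ⟨hx, hx1⟩, rfl⟩
  rintro _ ⟨y, ⟨hyW, hy1⟩, rfl⟩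
  simpa [hy1] using hC y hyW

theorem coneSpecRad_nonneg (f : X → X) (W : Set X) : 0 ≤ coneSpecRad f W :=
  le_ciInf fun _ => Real.rpow_nonneg (opNormW_nonneg _ _) _

theorem coneSpecRad_le (f : X → X) (W : Set X) (n : ℕ+) :
    coneSpecRad f W ≤ opNormW f^[n] W ^ ((n : ℝ)⁻¹) :=
  ciInf_le ⟨0, by rintro _ ⟨n, rfl⟩; exact Real.rpow_nonneg (opNormW_nonneg _ _) _⟩ n

theorem coneSpecRad_le_opNormW (f : X → X) (W : Set X) : coneSpecRad f W ≤ opNormW f W := by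
  simpa using coneSpecRad_le f W 1

variable [NormedSpace ℝ X] {K : Set X}

theorem norm_apply_le_opNormW_mul (hK : IsClosedCone K) (hf : HomogOn f K)
    (hfb : BoundedMapOn f K) {x : X} (hx : x ∈ K) : ‖f x‖ ≤ opNormW f K * ‖x‖ := by
  rcases eq_or_ne x 0 with rfl | hx0
  · simp [hf.map_zero hK]
  have hnx : 0 < ‖x‖ := norm_pos_iff.2 hx0
  have hfx : f x = ‖x‖ • f (‖x‖⁻¹ • x) := by
    rw [← hf.2 _ hnx _ (hK.smul_mem (by positivity) hx), smul_inv_smul₀ hnx.ne']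
  rw [hfx, norm_smul, norm_norm, mul_comm]
  gcongr
  exact norm_apply_le_opNormW hfb (hK.smul_mem (by positivity) hx)
    (by rw [norm_smul, norm_inv, norm_norm, inv_mul_cancel₀ hnx.ne'])

theorem opNormW_comp_le (hK : IsClosedCone K) (hf : HomogOn f K) (hg : HomogOn g K)
    (hfb : BoundedMapOn f K) (hgb : BoundedMapOn g K) :
    opNormW (f ∘ g) K ≤ opNormW f K * opNormW g K := by
  refine opNormW_le_of_norm_apply_le (by positivity [opNormW_nonneg f K, opNormW_nonneg g K])
    fun x hx => ?_
  calc ‖f (g x)‖ ≤ opNormW f K * ‖g x‖ := norm_apply_le_opNormW_mul hK hf hfb (hg.1 hx)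
    _ ≤ opNormW f K * (opNormW g K * ‖x‖) := by
        gcongr
        · exact opNormW_nonneg f K
        · exact norm_apply_le_opNormW_mul hK hg hgb hx
    _ = opNormW f K * opNormW g K * ‖x‖ := (mul_assoc _ _ _).symm

/-- The Collatz–Wielandt bound; `N` is a normality constant of `K`. -/
theorem div_le_coneSpecRad_of_sub_smul_mem (hK : IsClosedCone K) (hf : HomogOn f K)
    (hfo : OrderPresOn f K) (hfb : BoundedMapOn f K) {N : ℝ} (hN : 1 ≤ N)
    (hnorm : ∀ y z : X, y ∈ K → z - y ∈ K → ‖y‖ ≤ N * ‖z‖) {u : X} (hu : u ∈ K) (hu0 : u ≠ 0)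
    {l : ℝ} (hl : 0 < l) (hfu : f u - l • u ∈ K) : l / N ≤ coneSpecRad f K := by
  have hiter : ∀ k : ℕ, f^[k] u - l ^ k • u ∈ K := by
    intro k
    induction k with
    | zero => simpa using hK.zero_mem
    | succ k ih =>
      have hmono := hfo _ (hK.smul_mem (by positivity) hu) _ (hf.1.iterate k hu) ih
      rw [hf.2 _ (by positivity) u hu] at hmono
      convert hK.add_mem hmono (hK.smul_mem (pow_nonneg hl.le k) hfu) using 1
      rw [Function.iterate_succ_apply', smul_sub, smul_smul, pow_succ]
      abel
  refine le_ciInf fun k => ?_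
  have hnu : 0 < ‖u‖ := norm_pos_iff.2 hu0
  have hpow : l ^ (k : ℕ) * ‖u‖ ≤ N * opNormW f^[k] K * ‖u‖ :=
    calc l ^ (k : ℕ) * ‖u‖ = ‖l ^ (k : ℕ) • u‖ := by
          rw [norm_smul, Real.norm_of_nonneg (by positivity)]
      _ ≤ N * ‖f^[k] u‖ := hnorm _ _ (hK.smul_mem (by positivity) hu) (hiter k)
      _ ≤ N * (opNormW f^[k] K * ‖u‖) := by
          gcongr
          exact norm_apply_le_opNormW_mul hK (hf.iterate k) (hfb.iterate hf.1 k) hu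
      _ = N * opNormW f^[k] K * ‖u‖ := (mul_assoc _ _ _).symm
  have hpow' : (l / N) ^ (k : ℕ) ≤ opNormW f^[k] K :=
    calc (l / N) ^ (k : ℕ) = l ^ (k : ℕ) / N ^ (k : ℕ) := div_pow _ _ _
      _ ≤ l ^ (k : ℕ) / N := by gcongr; exact le_self_pow₀ hN k.ne_zero
      _ ≤ opNormW f^[k] K := by
          rw [div_le_iff₀ (by positivity), mul_comm]
          exact le_of_mul_le_mul_right hpow hnu
  calc l / N = ((l / N) ^ (k : ℕ)) ^ ((k : ℝ)⁻¹) :=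
        (Real.pow_rpow_inv_natCast (by positivity) k.ne_zero).symm
    _ ≤ opNormW f^[k] K ^ ((k : ℝ)⁻¹) := by gcongr

theorem opNormW_le_mul_norm_apply (hK : IsClosedCone K) (hf : HomogOn f K)
    (hfo : OrderPresOn f K) {N : ℝ} (hN : 0 ≤ N)
    (hnorm : ∀ y z : X, y ∈ K → z - y ∈ K → ‖y‖ ≤ N * ‖z‖) {u : X} (hu : u ∈ K) {M : ℝ}
    (hM : 0 < M) (hdom : ∀ x : X, (M * ‖x‖) • u - x ∈ K) : opNormW f K ≤ N * M * ‖f u‖ := by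
  refine opNormW_le (by positivity) fun x hx hx1 => ?_
  have hfx := hfo x hx _ (hK.smul_mem (by positivity) hu) (hdom x)
  rw [hf.2 _ (by rw [hx1, mul_one]; exact hM) u hu] at hfx
  calc ‖f x‖ ≤ N * ‖(M * ‖x‖) • f u‖ := hnorm _ _ (hf.1 hx) hfx
    _ = N * M * ‖f u‖ := by rw [norm_smul, Real.norm_of_nonneg (by positivity), hx1]; ring

end OpNorm

section SpectralRadii

variable {X : Type*} [NormedAddCommGroup X] {K : Set X} {A : Set (X → X)} {C : ℝ} {m : ℕ}
  {f : X → X}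

theorem jointTerm_nonneg (A : Set (X → X)) (K : Set X) (m : ℕ) : 0 ≤ jointTerm A K m :=
  Real.sSup_nonneg (by rintro _ ⟨f, _, rfl⟩; exact Real.rpow_nonneg (opNormW_nonneg _ _) _)

theorem genTerm_nonneg (A : Set (X → X)) (K : Set X) (m : ℕ) : 0 ≤ genTerm A K m :=
  Real.sSup_nonneg (by rintro _ ⟨f, _, rfl⟩; exact Real.rpow_nonneg (coneSpecRad_nonneg _ _) _)

theorem jointRad_nonneg (A : Set (X → X)) (K : Set X) : 0 ≤ jointRad A K :=
  le_ciInf fun _ => jointTerm_nonneg _ _ _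

theorem jointRad_le_of_forall_opNormW_le {D r : ℝ} (hD : 0 < D) (hr : 0 ≤ r)
    (h : ∀ n : ℕ, n ≠ 0 → ∀ f ∈ famPow A n, opNormW f K ≤ D * r ^ n) : jointRad A K ≤ r := by
  have hterm : ∀ n : ℕ+, jointRad A K ≤ D ^ ((n : ℝ)⁻¹) * r := fun n => by
    refine (ciInf_le ⟨0, ?_⟩ n).trans (Real.sSup_le ?_ (by positivity))
    · rintro _ ⟨n, rfl⟩
      exact jointTerm_nonneg _ _ _
    rintro _ ⟨f, hf, rfl⟩
    calc opNormW f K ^ ((n : ℝ)⁻¹) ≤ (D * r ^ (n : ℕ)) ^ ((n : ℝ)⁻¹) := by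
          gcongr
          · exact opNormW_nonneg f K
          · exact h n n.ne_zero f hf
      _ = D ^ ((n : ℝ)⁻¹) * r := by
          rw [Real.mul_rpow hD.le (by positivity), Real.pow_rpow_inv_natCast hr n.ne_zero]
  have hlim : Tendsto (fun n : ℕ => D ^ ((n : ℝ)⁻¹) * r) atTop (𝓝 r) := by
    have hexp : Tendsto (fun x : ℝ => D ^ x) (𝓝 0) (𝓝 1) := by
      simpa using (Real.continuousAt_const_rpow (b := 0) hD.ne').tendsto
    have hroot : Tendsto (fun n : ℕ => D ^ ((n : ℝ)⁻¹)) atTop (𝓝 1) :=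
      hexp.comp (tendsto_inv_atTop_zero.comp tendsto_natCast_atTop_atTop)
    simpa using hroot.mul_const r
  refine ge_of_tendsto hlim ?_
  filter_upwards [eventually_ge_atTop 1] with n hn
  exact hterm ⟨n, hn⟩

theorem opNormW_le_pow_of_mem_famPow (hmaps : ∀ f ∈ A, MapsTo f K K) (hC : 0 ≤ C)
    (hb : ∀ f ∈ A, ∀ x ∈ K, ‖f x‖ ≤ C * ‖x‖) (hf : f ∈ famPow A m) : opNormW f K ≤ C ^ m :=
  opNormW_le_of_norm_apply_le (by positivity)
    (norm_apply_le_pow_mul_of_mem_famPow hmaps hC hb hf)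

theorem rpow_opNormW_le_jointTerm (hmaps : ∀ f ∈ A, MapsTo f K K) (hC : 0 ≤ C)
    (hb : ∀ f ∈ A, ∀ x ∈ K, ‖f x‖ ≤ C * ‖x‖) (hf : f ∈ famPow A m) :
    opNormW f K ^ ((m : ℝ)⁻¹) ≤ jointTerm A K m := by
  refine le_csSup ⟨(C ^ m) ^ ((m : ℝ)⁻¹), ?_⟩ ⟨f, hf, rfl⟩
  rintro _ ⟨g, hg, rfl⟩
  exact Real.rpow_le_rpow (opNormW_nonneg g K) (opNormW_le_pow_of_mem_famPow hmaps hC hb hg)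
    (by positivity)

theorem rpow_coneSpecRad_le_genTerm (hmaps : ∀ f ∈ A, MapsTo f K K) (hC : 0 ≤ C)
    (hb : ∀ f ∈ A, ∀ x ∈ K, ‖f x‖ ≤ C * ‖x‖) (hf : f ∈ famPow A m) :
    coneSpecRad f K ^ ((m : ℝ)⁻¹) ≤ genTerm A K m := by
  refine le_csSup ⟨(C ^ m) ^ ((m : ℝ)⁻¹), ?_⟩ ⟨f, hf, rfl⟩
  rintro _ ⟨g, hg, rfl⟩
  exact Real.rpow_le_rpow (coneSpecRad_nonneg g K)
    ((coneSpecRad_le_opNormW g K).trans (opNormW_le_pow_of_mem_famPow hmaps hC hb hg))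
    (by positivity)

theorem genTerm_le (hmaps : ∀ f ∈ A, MapsTo f K K) (hC : 0 ≤ C)
    (hb : ∀ f ∈ A, ∀ x ∈ K, ‖f x‖ ≤ C * ‖x‖) (hm : m ≠ 0) : genTerm A K m ≤ C := by
  refine Real.sSup_le ?_ hC
  rintro _ ⟨f, hf, rfl⟩
  calc coneSpecRad f K ^ ((m : ℝ)⁻¹) ≤ (C ^ m) ^ ((m : ℝ)⁻¹) := by
        gcongr
        · exact coneSpecRad_nonneg f K
        · exact (coneSpecRad_le_opNormW f K).trans
            (opNormW_le_pow_of_mem_famPow hmaps hC hb hf)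
    _ = C := Real.pow_rpow_inv_natCast hC hm

theorem genTerm_le_genRad (hmaps : ∀ f ∈ A, MapsTo f K K) (hC : 0 ≤ C)
    (hb : ∀ f ∈ A, ∀ x ∈ K, ‖f x‖ ≤ C * ‖x‖) (m : ℕ+) : genTerm A K m ≤ genRad A K :=
  le_ciSup ⟨C, by rintro _ ⟨n, rfl⟩; exact genTerm_le hmaps hC hb n.ne_zero⟩ m

theorem genRad_nonneg (hmaps : ∀ f ∈ A, MapsTo f K K) (hC : 0 ≤ C)
    (hb : ∀ f ∈ A, ∀ x ∈ K, ‖f x‖ ≤ C * ‖x‖) : 0 ≤ genRad A K :=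
  (genTerm_nonneg A K 1).trans (genTerm_le_genRad hmaps hC hb 1)

theorem coneSpecRad_le_genRad_pow (hmaps : ∀ f ∈ A, MapsTo f K K) (hC : 0 ≤ C)
    (hb : ∀ f ∈ A, ∀ x ∈ K, ‖f x‖ ≤ C * ‖x‖) (hm : m ≠ 0) (hf : f ∈ famPow A m) :
    coneSpecRad f K ≤ genRad A K ^ m := by
  have hroot : coneSpecRad f K ^ ((m : ℝ)⁻¹) ≤ genRad A K :=
    (rpow_coneSpecRad_le_genTerm hmaps hC hb hf).trans
      (genTerm_le_genRad hmaps hC hb ⟨m, Nat.pos_of_ne_zero hm⟩)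
  calc coneSpecRad f K = (coneSpecRad f K ^ ((m : ℝ)⁻¹)) ^ m :=
        (Real.rpow_inv_natCast_pow (coneSpecRad_nonneg f K) hm).symm
    _ ≤ genRad A K ^ m := by gcongr; positivity [coneSpecRad_nonneg f K]

theorem coneSpecRad_comp_le_max_pow_mul (hmaps : ∀ f ∈ A, MapsTo f K K) (hC : 0 ≤ C)
    (hb : ∀ f ∈ A, ∀ x ∈ K, ‖f x‖ ≤ C * ‖x‖) {g : X → X} {n M₀ : ℕ} (hm : m ≤ M₀) (hn : n ≠ 0)
    (hg : g ∈ famPow A m) (hf : f ∈ famPow A n) :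
    coneSpecRad (g ∘ f) K ≤ max (genRad A K) 1 ^ M₀ * genRad A K ^ n := by
  set r := genRad A K
  have hr : 0 ≤ r := genRad_nonneg hmaps hC hb
  calc coneSpecRad (g ∘ f) K ≤ r ^ (m + n) :=
        coneSpecRad_le_genRad_pow hmaps hC hb (by omega) (comp_mem_famPow_add hg hf)
    _ = r ^ m * r ^ n := pow_add r m n
    _ ≤ max r 1 ^ M₀ * r ^ n := by
        gcongr
        calc r ^ m ≤ max r 1 ^ m := by gcongr; exact le_max_left r 1
          _ ≤ max r 1 ^ M₀ := pow_le_pow_right₀ (le_max_right r 1) hm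

variable [NormedSpace ℝ X]

theorem opNormW_le_jointTerm_pow_mul (hK : IsClosedCone K) (hA : ∀ f ∈ A, HomogOn f K)
    (hC : 0 ≤ C) (hb : ∀ f ∈ A, ∀ x ∈ K, ‖f x‖ ≤ C * ‖x‖) {t : ℕ} (ht : t ≠ 0) :
    ∀ k : ℕ, ∀ h ∈ famPow A (k * t), opNormW h K ≤ (jointTerm A K t ^ t) ^ k := by
  have hmaps : ∀ f ∈ A, MapsTo f K K := fun f hf => (hA f hf).1
  have hbdd : ∀ {n : ℕ} {g : X → X}, g ∈ famPow A n → BoundedMapOn g K :=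
    fun hg => ⟨_, norm_apply_le_pow_mul_of_mem_famPow hmaps hC hb hg⟩
  intro k
  induction k with
  | zero =>
    intro h hh
    rw [zero_mul] at hh
    obtain rfl : h = id := hh
    simpa using opNormW_le_of_norm_apply_le (f := id) (W := K) zero_le_one (by simp)
  | succ k ih =>
    intro h hh
    rw [Nat.succ_mul, add_comm, famPow_add] at hh
    obtain ⟨p, hp, q, hq, rfl⟩ := hh
    have hpJ : opNormW p K ≤ jointTerm A K t ^ t := by
      rw [← Real.rpow_inv_natCast_pow (opNormW_nonneg p K) ht]
      gcongr
      · positivity [opNormW_nonneg p K]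
      · exact rpow_opNormW_le_jointTerm hmaps hC hb hp
    calc opNormW (p ∘ q) K ≤ opNormW p K * opNormW q K :=
          opNormW_comp_le hK (homogOn_of_mem_famPow hA hp) (homogOn_of_mem_famPow hA hq)
            (hbdd hp) (hbdd hq)
      _ ≤ jointTerm A K t ^ t * (jointTerm A K t ^ t) ^ k := by
          gcongr
          · exact opNormW_nonneg q K
          · positivity [jointTerm_nonneg A K t]
          · exact ih q hq
      _ = (jointTerm A K t ^ t) ^ (k + 1) := (pow_succ' _ _).symm

theorem genRad_le_jointRad (hK : IsClosedCone K) (hA : ∀ f ∈ A, HomogOn f K) (hC : 0 ≤ C)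
    (hb : ∀ f ∈ A, ∀ x ∈ K, ‖f x‖ ≤ C * ‖x‖) : genRad A K ≤ jointRad A K := by
  refine ciSup_le fun m => Real.sSup_le ?_ (jointRad_nonneg A K)
  rintro _ ⟨f, hf, rfl⟩
  refine le_ciInf fun t => ?_
  set J := jointTerm A K t
  have hJ : 0 ≤ J := jointTerm_nonneg A K t
  -- `f^[t]` splits into `m` blocks of length `t`, each of norm at most `J ^ t`.
  have hblocks : opNormW f^[t] K ≤ (J ^ (t : ℕ)) ^ (m : ℕ) :=
    opNormW_le_jointTerm_pow_mul hK hA hC hb t.ne_zero m _ (iterate_mem_famPow hf t)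
  have hrad : coneSpecRad f K ≤ J ^ (m : ℕ) :=
    calc coneSpecRad f K ≤ opNormW f^[t] K ^ ((t : ℝ)⁻¹) := coneSpecRad_le f K t
      _ ≤ ((J ^ (m : ℕ)) ^ (t : ℕ)) ^ ((t : ℝ)⁻¹) := by
          rw [← pow_mul, mul_comm, pow_mul]
          gcongr
          exact opNormW_nonneg _ K
      _ = J ^ (m : ℕ) := Real.pow_rpow_inv_natCast (by positivity) t.ne_zero
  calc coneSpecRad f K ^ ((m : ℝ)⁻¹) ≤ (J ^ (m : ℕ)) ^ ((m : ℝ)⁻¹) := by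
        gcongr
        exact coneSpecRad_nonneg f K
    _ = J := Real.pow_rpow_inv_natCast hJ m.ne_zero

end SpectralRadii

section Primitive

variable {X : Type*} [NormedAddCommGroup X] [NormedSpace ℝ X] {K : Set X} {A : Set (X → X)}
  {C : ℝ}

theorem exists_uniform_primitive [FiniteDimensional ℝ X] (hK : IsClosedCone K)
    (hcont : ∀ m, ∀ f ∈ famPow A m, ContinuousOn f K)
    (hprim : ∀ x ∈ K, x ≠ 0 → ∃ m, ∃ f ∈ famPow A m, f x ∈ interior K) {u : X} (hu : u ∈ K) :
    ∃ (M₀ : ℕ) (δ : ℝ), 0 < δ ∧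
      ∀ x ∈ K, ‖x‖ = 1 → ∃ m ≤ M₀, ∃ g ∈ famPow A m, g x - δ • u ∈ K := by
  set S := K ∩ Metric.sphere (0 : X) 1
  suffices h : ∃ (M₀ : ℕ) (δ : ℝ), 0 < δ ∧
      ∀ x ∈ S, ∃ m ≤ M₀, ∃ g ∈ famPow A m, g x - δ • u ∈ K by
    obtain ⟨M₀, δ, hδ, h⟩ := h
    exact ⟨M₀, δ, hδ, fun x hx hx1 => h x ⟨hx, by simpa using hx1⟩⟩
  have hS : IsCompact S := (isCompact_sphere 0 1).inter_left hK.1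
  refine hS.induction_on ⟨0, 1, one_pos, fun _ h => h.elim⟩
    (fun s t hst ⟨M₀, δ, hδ, h⟩ => ⟨M₀, δ, hδ, fun x hx => h x (hst hx)⟩) ?_ ?_
  · rintro s t ⟨M₁, δ₁, hδ₁, h₁⟩ ⟨M₂, δ₂, hδ₂, h₂⟩
    refine ⟨max M₁ M₂, min δ₁ δ₂, lt_min hδ₁ hδ₂, ?_⟩
    rintro x (hx | hx)
    · obtain ⟨m, hm, g, hg, hgx⟩ := h₁ x hx
      exact ⟨m, hm.trans (le_max_left _ _), g, hg,
        hK.sub_smul_mem_of_le hu hgx (min_le_left _ _)⟩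
    · obtain ⟨m, hm, g, hg, hgx⟩ := h₂ x hx
      exact ⟨m, hm.trans (le_max_right _ _), g, hg,
        hK.sub_smul_mem_of_le hu hgx (min_le_right _ _)⟩
  · rintro x ⟨hxK, hx1⟩
    obtain ⟨m, g, hg, hgx⟩ := hprim x hxK (by rintro rfl; simp at hx1)
    have hsmall : ∀ᶠ ε in 𝓝 (0 : ℝ), g x - ε • u ∈ interior K :=
      (continuous_const.sub (continuous_id.smul continuous_const)).continuousAt.preimage_mem_nhds
        (by simpa using isOpen_interior.mem_nhds hgx)
    obtain ⟨ε, hεx, hε⟩ :=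
      ((hsmall.filter_mono nhdsWithin_le_nhds).and (self_mem_nhdsWithin (s := Ioi 0))).exists
    have hnear : g ⁻¹' {z | z - ε • u ∈ interior K} ∈ 𝓝[S] x :=
      ((hcont m g hg).mono inter_subset_left x ⟨hxK, hx1⟩)
        ((isOpen_interior.preimage (continuous_id.sub continuous_const)).mem_nhds hεx)
    exact ⟨_, hnear, m, ε, hε, fun y hy => ⟨m, le_rfl, g, hg, interior_subset hy⟩⟩

theorem norm_apply_le_of_uniform_primitive (hK : IsClosedCone K)
    (hA : ∀ f ∈ A, HomogOn f K ∧ OrderPresOn f K) (hC : 0 ≤ C)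
    (hb : ∀ f ∈ A, ∀ x ∈ K, ‖f x‖ ≤ C * ‖x‖) {N : ℝ} (hN : 1 ≤ N)
    (hnorm : ∀ y z : X, y ∈ K → z - y ∈ K → ‖y‖ ≤ N * ‖z‖) {u : X} (hu : u ∈ K) {M₀ : ℕ}
    {δ : ℝ} (hδ : 0 < δ) (hunif : ∀ x ∈ K, ‖x‖ = 1 → ∃ m ≤ M₀, ∃ g ∈ famPow A m, g x - δ • u ∈ K)
    {n : ℕ} (hn : n ≠ 0) {f : X → X} (hf : f ∈ famPow A n) :
    ‖f u‖ ≤ N * max (genRad A K) 1 ^ M₀ / δ * genRad A K ^ n := by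
  set r := genRad A K
  have hmaps : ∀ f ∈ A, MapsTo f K K := fun f hf => (hA f hf).1.1
  have hhom : ∀ {m : ℕ} {g : X → X}, g ∈ famPow A m → HomogOn g K :=
    homogOn_of_mem_famPow fun f hf => (hA f hf).1
  have hr : 0 ≤ r := genRad_nonneg hmaps hC hb
  rcases eq_or_ne (f u) 0 with h0 | h0
  · rw [h0, norm_zero]
    positivity
  set R := ‖f u‖
  have hR : 0 < R := norm_pos_iff.2 h0
  obtain ⟨m, hm, g, hg, hgx⟩ := hunif (R⁻¹ • f u) (hK.smul_mem (by positivity) ((hhom hf).1 hu))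
    (by rw [norm_smul, norm_inv, norm_norm, inv_mul_cancel₀ hR.ne'])
  have hgf : g ∘ f ∈ famPow A (m + n) := comp_mem_famPow_add hg hf
  -- Rescaling, primitivity at `f u / ‖f u‖` gives `(g ∘ f) u ≥ ‖f u‖ δ u`.
  have hgfu : (g ∘ f) u - (R * δ) • u ∈ K := by
    have hgf_eq : (g ∘ f) u = R • g (R⁻¹ • f u) := by
      rw [← (hhom hg).2 R hR _ (hK.smul_mem (by positivity) ((hhom hf).1 hu)),
        smul_inv_smul₀ hR.ne', Function.comp_apply]
    rw [hgf_eq, ← smul_smul, ← smul_sub]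
    exact hK.smul_mem hR.le hgx
  have hlow : R * δ / N ≤ coneSpecRad (g ∘ f) K :=
    div_le_coneSpecRad_of_sub_smul_mem hK (hhom hgf)
      (orderPresOn_of_mem_famPow hmaps (fun f hf => (hA f hf).2) hgf)
      ⟨_, norm_apply_le_pow_mul_of_mem_famPow hmaps hC hb hgf⟩ hN hnorm hu
      (by rintro rfl; exact h0 ((hhom hf).map_zero hK)) (by positivity) hgfu
  have hup : coneSpecRad (g ∘ f) K ≤ max r 1 ^ M₀ * r ^ n :=
    coneSpecRad_comp_le_max_pow_mul hmaps hC hb hm hn hg hf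
  calc R = R * δ / N * N / δ := by field_simp
    _ ≤ max r 1 ^ M₀ * r ^ n * N / δ := by gcongr; exact hlow.trans hup
    _ = N * max r 1 ^ M₀ / δ * r ^ n := by ring

theorem jointRad_le_genRad [FiniteDimensional ℝ X] (hK : IsClosedCone K)
    (hint : (interior K).Nonempty) (hA : ∀ f ∈ A, ContinuousOn f K ∧ HomogOn f K ∧ OrderPresOn f K)
    (hC : 0 ≤ C) (hb : ∀ f ∈ A, ∀ x ∈ K, ‖f x‖ ≤ C * ‖x‖)
    (hprim : ∀ x ∈ K, x ≠ 0 → ∃ m, ∃ f ∈ famPow A m, f x ∈ interior K) :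
    jointRad A K ≤ genRad A K := by
  obtain ⟨u, hu⟩ := hint
  have hmaps : ∀ f ∈ A, MapsTo f K K := fun f hf => (hA f hf).2.1.1
  obtain ⟨N, hN, hnorm⟩ := hK.exists_norm_le_mul_norm
  obtain ⟨M, hM, hdom⟩ := hK.exists_smul_sub_mem_of_mem_interior hu
  obtain ⟨M₀, δ, hδ, hunif⟩ := exists_uniform_primitive hK
    (fun _ _ hf => continuousOn_of_mem_famPow hmaps (fun f hf => (hA f hf).1) hf) hprim
    (interior_subset hu)
  set r := genRad A K
  refine jointRad_le_of_forall_opNormW_le (D := N * M * (N * max r 1 ^ M₀ / δ))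
    (by positivity) (genRad_nonneg hmaps hC hb) fun n hn f hf => ?_
  calc opNormW f K ≤ N * M * ‖f u‖ :=
        opNormW_le_mul_norm_apply hK (homogOn_of_mem_famPow (fun f hf => (hA f hf).2.1) hf)
          (orderPresOn_of_mem_famPow hmaps (fun f hf => (hA f hf).2.2) hf) (by positivity)
          hnorm (interior_subset hu) hM hdom
    _ ≤ N * M * (N * max r 1 ^ M₀ / δ * r ^ n) := by
        gcongr
        exact norm_apply_le_of_uniform_primitive hK (fun f hf => (hA f hf).2) hC hb hN hnorm
          (interior_subset hu) hδ hunif hn hf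
    _ = N * M * (N * max r 1 ^ M₀ / δ) * r ^ n := by ring

end Primitive

theorem statement13 {X : Type*} [NormedAddCommGroup X] [NormedSpace ℝ X]
    [FiniteDimensional ℝ X]
    (K : Set X) (hK : IsClosedCone K) (hint : (interior K).Nonempty)
    (A : Set (X → X))
    (hA : ∀ f ∈ A, ContinuousOn f K ∧ HomogOn f K ∧ OrderPresOn f K)
    (hbdd : BoundedFamOn A K)
    (hprim : ∀ x ∈ K, x ≠ 0 → ∃ m : ℕ, 0 < m ∧ ∃ f ∈ famPow A m, f x ∈ interior K) :
    genRad A K = jointRad A K := by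
  obtain ⟨C, hC⟩ := hbdd
  have hb : ∀ f ∈ A, ∀ x ∈ K, ‖f x‖ ≤ max C 0 * ‖x‖ := fun f hf x hx =>
    (hC f hf x hx).trans (by gcongr; exact le_max_left C 0)
  exact le_antisymm (genRad_le_jointRad hK (fun f hf => (hA f hf).2.1) (le_max_right C 0) hb)
    (jointRad_le_genRad hK hint hA (le_max_right C 0) hb fun x hx hx0 =>
      (hprim x hx hx0).imp fun _ h => h.2)
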